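/- arXiv:math/0510054 — 2 statements merged into one kernel-verified Lean document; each statement's English description precedes it below -/
import Mathlib

section
/- For every complex number x with |x| < 1, (∑_{n ∈ ℤ} (−1)^n x^{n(3n−1)}) · ∏_{m=1}^∞ (1 − x^{2m−1}) = ∑_{n ∈ ℤ} (−1)^n x^{n(3n−1)/2} (Goldbach's identity relating the pentagonal series in x and in x², corrected: the pentagonal series in x equals the pentagonal series in x² times the product over odd exponents). -/
/-!
Euler's pentagonal number theorem `∏ (1 - x^(n+1)) = ∑ₙ (-1)ⁿ x^(n(3n-1)/2)` holds for every
topologically nilpotent `x` for which a few auxiliary series converge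
(`Pentagonal.tprod_one_sub_pow`). For `‖x‖ < 1` in a complete normed commutative ring they all
do: the partial products `∏ (1 - x^j)` stay bounded by `exp (1 - ‖x‖)⁻¹`, so every auxiliary
series is dominated by a geometric one.

Goldbach's identity then comes from splitting the Euler product into odd and even exponents,
`∏ (1 - x^(n+1)) = ∏ (1 - x^(2m+1)) * ∏ (1 - (x²)^(n+1))`, and reading both Euler products as
pentagonal series, in `x` and in `x²`; the exponent `n(3n-1)` is twice a pentagonal number.
-/

open Filter Topology

theorem natAbs_le_pentagonal (k : ℤ) : k.natAbs ≤ pentagonal k := by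
  have h := two_mul_natCast_pentagonal k
  rcases le_total 0 k with hk | hk
  · zify; rw [abs_of_nonneg hk]; nlinarith
  · zify; rw [abs_of_nonpos hk]; nlinarith

theorem toNat_mul_three_mul_sub_one (k : ℤ) : (k * (3 * k - 1)).toNat = 2 * pentagonal k := by
  have := two_mul_natCast_pentagonal k
  omega

section NormedCommRing

variable {R : Type*} [NormedCommRing R] [NormOneClass R] {x : R}

theorem norm_pow_le_pow_of_le (hx : ‖x‖ ≤ 1) {m n : ℕ} (h : n ≤ m) : ‖x ^ m‖ ≤ ‖x‖ ^ n :=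
  (norm_pow_le x m).trans (pow_le_pow_of_le_one (norm_nonneg x) hx h)

theorem norm_prod_one_sub_pow_le (hx : ‖x‖ < 1) (k n : ℕ) :
    ‖∏ i ∈ Finset.range n, (1 - x ^ (k + i + 1))‖ ≤ Real.exp (1 - ‖x‖)⁻¹ := by
  have hsum : ∑ i ∈ Finset.range n, ‖-x ^ (k + i + 1)‖ ≤ (1 - ‖x‖)⁻¹ := by
    rw [← tsum_geometric_of_lt_one (norm_nonneg x) hx]
    refine (Finset.sum_le_sum fun i _ ↦ ?_).trans
      ((summable_geometric_of_lt_one (norm_nonneg x) hx).sum_le_tsum _ fun i _ ↦ by positivity)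
    rw [norm_neg]
    exact norm_pow_le_pow_of_le hx.le (by omega)
  have hprod := (Finset.range n).norm_prod_one_add_sub_one_le fun i ↦ -x ^ (k + i + 1)
  simp_rw [← sub_eq_add_neg] at hprod
  calc ‖∏ i ∈ Finset.range n, (1 - x ^ (k + i + 1))‖
      ≤ ‖∏ i ∈ Finset.range n, (1 - x ^ (k + i + 1)) - 1‖ + ‖(1 : R)‖ := norm_le_norm_sub_add _ _
    _ ≤ Real.exp (∑ i ∈ Finset.range n, ‖-x ^ (k + i + 1)‖) := by
        rw [norm_one]; linarith
    _ ≤ Real.exp (1 - ‖x‖)⁻¹ := Real.exp_le_exp.mpr hsum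

theorem norm_pow_mul_prod_one_sub_pow_le (hx : ‖x‖ < 1) (k n m : ℕ) :
    ‖x ^ ((k + 1) * n) * ∏ i ∈ Finset.range m, (1 - x ^ (k + i + 1))‖ ≤
      ‖x‖ ^ n * Real.exp (1 - ‖x‖)⁻¹ :=
  (norm_mul_le _ _).trans <| mul_le_mul
    (norm_pow_le_pow_of_le hx.le (Nat.le_mul_of_pos_left n k.succ_pos))
    (norm_prod_one_sub_pow_le hx k m) (norm_nonneg _) (by positivity)

/-- The remainder term of `Pentagonal.tprod_one_sub_pow` tends to zero. -/
theorem tendsto_neg_one_pow_mul_pow_mul_of_bounded (hx : ‖x‖ < 1) {A : ℕ → R} {B : ℝ}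
    (hA : ∀ k, ‖A k‖ ≤ B) :
    Tendsto (fun k ↦ (-1) ^ (k + 1) * x ^ ((k + 1) * (3 * k + 4) / 2) * A k) atTop (𝓝 0) := by
  refine squeeze_zero_norm (a := fun k ↦ ‖x‖ ^ k * B) (fun k ↦ ?_) ?_
  · have hk : k ≤ (k + 1) * (3 * k + 4) / 2 := by
      rw [Nat.le_div_iff_mul_le two_pos]; nlinarith
    calc ‖(-1) ^ (k + 1) * x ^ ((k + 1) * (3 * k + 4) / 2) * A k‖
        ≤ ‖(-1 : R) ^ (k + 1)‖ * ‖x ^ ((k + 1) * (3 * k + 4) / 2)‖ * ‖A k‖ := norm_mul₃_le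
      _ ≤ 1 * ‖x‖ ^ k * B := by
        gcongr
        · simpa using norm_pow_le (-1 : R) (k + 1)
        · exact norm_pow_le_pow_of_le hx.le hk
        · exact hA k
      _ = ‖x‖ ^ k * B := by rw [one_mul]
  · simpa using (tendsto_pow_atTop_nhds_zero_of_lt_one (norm_nonneg x) hx).mul_const B

variable [CompleteSpace R]

theorem summable_pow_mul_prod_one_sub_pow (hx : ‖x‖ < 1) (k : ℕ) :
    Summable fun n ↦ x ^ ((k + 1) * n) * ∏ i ∈ Finset.range (n + 1), (1 - x ^ (k + i + 1)) :=
  ((summable_geometric_of_lt_one (norm_nonneg x) hx).mul_right _).of_norm_bounded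
    fun n ↦ norm_pow_mul_prod_one_sub_pow_le hx k n (n + 1)

theorem multipliable_one_sub_pow_of_le (hx : ‖x‖ < 1) {e : ℕ → ℕ} (he : ∀ n, n ≤ e n) :
    Multipliable fun n ↦ 1 - x ^ e n := by
  simp_rw [sub_eq_add_neg]
  refine multipliable_one_add_of_summable <|
    (summable_geometric_of_lt_one (norm_nonneg x) hx).of_nonneg_of_le (fun _ ↦ norm_nonneg _)
      fun n ↦ ?_
  rw [norm_neg]
  exact norm_pow_le_pow_of_le hx.le (he n)

theorem tprod_one_sub_pow_eq_tprod_one_sub_pow_odd_mul (hx : ‖x‖ < 1) :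
    ∏' n, (1 - x ^ (n + 1)) = (∏' m, (1 - x ^ (2 * m + 1))) * ∏' n, (1 - (x ^ 2) ^ (n + 1)) := by
  rw [← tprod_even_mul_odd (f := fun n ↦ 1 - x ^ (n + 1))
    (multipliable_one_sub_pow_of_le hx fun n ↦ by omega)
    (multipliable_one_sub_pow_of_le hx fun n ↦ by omega)]
  congr with n
  ring

theorem summable_pow_pentagonal_neg_sub (hx : ‖x‖ < 1) :
    Summable fun k : ℕ ↦ (-1) ^ k * (x ^ pentagonal (-k) - x ^ pentagonal (k + 1)) := by
  refine ((summable_geometric_of_lt_one (norm_nonneg x) hx).mul_left 2).of_norm_bounded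
    fun k ↦ ?_
  have hle (j : ℤ) (hj : k ≤ j.natAbs) : ‖x ^ pentagonal j‖ ≤ ‖x‖ ^ k :=
    norm_pow_le_pow_of_le hx.le (hj.trans (natAbs_le_pentagonal j))
  calc ‖(-1) ^ k * (x ^ pentagonal (-k) - x ^ pentagonal (k + 1))‖
      ≤ ‖(-1 : R) ^ k‖ * (‖x ^ pentagonal (-k)‖ + ‖x ^ pentagonal (k + 1)‖) :=
        (norm_mul_le _ _).trans (by gcongr; exact norm_sub_le _ _)
    _ ≤ 1 * (‖x‖ ^ k + ‖x‖ ^ k) := by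
        gcongr
        · simpa using norm_pow_le (-1 : R) k
        · exact hle _ (by omega)
        · exact hle _ (by omega)
    _ = 2 * ‖x‖ ^ k := by ring

theorem tprod_one_sub_pow_eq_tsum_pentagonal (hx : ‖x‖ < 1) :
    ∏' n, (1 - x ^ (n + 1)) =
      ∑' k : ℕ, (-1) ^ k * (x ^ pentagonal (-k) - x ^ pentagonal (k + 1)) :=
  Pentagonal.tprod_one_sub_pow (tendsto_pow_atTop_nhds_zero_of_norm_lt_one hx)
    (summable_pow_mul_prod_one_sub_pow hx)
    (fun k ↦ multipliable_one_sub_pow_of_le hx fun n ↦ by omega)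
    (summable_pow_pentagonal_neg_sub hx) <|
    tendsto_neg_one_pow_mul_pow_mul_of_bounded hx fun k ↦
      tsum_of_norm_bounded
        ((hasSum_geometric_of_lt_one (norm_nonneg x) hx).mul_right (Real.exp (1 - ‖x‖)⁻¹))
        fun n ↦ norm_pow_mul_prod_one_sub_pow_le hx k n (n + 1)

end NormedCommRing

section NormedField

variable {𝕜 : Type*} [NormedField 𝕜] [CompleteSpace 𝕜] {x : 𝕜}

theorem summable_zpow_mul_pow_pentagonal (hx : ‖x‖ < 1) :
    Summable fun n : ℤ ↦ (-1) ^ n * x ^ pentagonal n := by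
  refine ((summable_geometric_of_lt_one (norm_nonneg x) hx).comp_injective
    pentagonal_injective).of_norm_bounded fun n ↦ ?_
  simp [norm_zpow]

theorem hasSum_zpow_mul_pow_pentagonal (hx : ‖x‖ < 1) :
    HasSum (fun n : ℤ ↦ (-1) ^ n * x ^ pentagonal n) (∏' n, (1 - x ^ (n + 1))) := by
  have hsum := summable_zpow_mul_pow_pentagonal hx
  have h := ((Equiv.neg ℤ).hasSum_iff.mpr hsum.hasSum).nat_add_neg_add_one
  convert hsum.hasSum using 1
  rw [tprod_one_sub_pow_eq_tsum_pentagonal hx, ← h.tsum_eq]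
  congr with k
  simp only [Function.comp_apply, Equiv.neg_apply, neg_neg, zpow_neg,
    zpow_add_one₀ (neg_ne_zero.2 (one_ne_zero (α := 𝕜))),
    zpow_natCast, ← inv_pow, inv_neg_one]
  ring

end NormedField

/-- Goldbach's identity: for `‖x‖ < 1`, the pentagonal series in `x²` times the
product `∏_{m=1}^∞ (1 - x^{2m-1})` over odd exponents equals the pentagonal
series in `x`. -/
theorem goldbach_pentagonal_identity (x : ℂ) (hx : ‖x‖ < 1) :
    (∑' n : ℤ, (-1 : ℂ) ^ n * x ^ (n * (3 * n - 1)).toNat) *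
      ∏' m : ℕ, (1 - x ^ (2 * m + 1)) =
    ∑' n : ℤ, (-1 : ℂ) ^ n * x ^ (n * (3 * n - 1) / 2).toNat := by
  have hx2 : ‖x ^ 2‖ < 1 := by simpa using pow_lt_one₀ (norm_nonneg x) hx two_ne_zero
  simp_rw [toNat_mul_three_mul_sub_one, pow_mul, ← pentagonal_def]
  rw [(hasSum_zpow_mul_pow_pentagonal hx).tsum_eq, (hasSum_zpow_mul_pow_pentagonal hx2).tsum_eq,
    tprod_one_sub_pow_eq_tprod_one_sub_pow_odd_mul hx, mul_comm]
end

section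
/- For all complex numbers q, z with 0 < |q| < 1 and z ≠ 0, ∏_{m=1}^∞ (1 − q^{2m})(1 + q^{2m−1} z²)(1 + q^{2m−1} z^{−2}) = ∑_{n ∈ ℤ} q^{n²} z^{2n} (the Jacobi triple product identity). -/
/-!
Pulling `q^{-N²} w^N` out of the truncated product `∏_{j<N} (1 + q^{2j+1} w)(1 + q^{2j+1} w⁻¹)`
leaves `∏_{i<2N} (1 + Q^i x)` with `Q = q²` and `x = q^{1-2N} w`, which Rothe's `q`-binomial
theorem expands, so that the truncated product equals `∑_{|n| ≤ N} [2N, N+n]_Q q^{n²} w^n`.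
Multiplied by `(Q;Q)_N`, the coefficient of `q^{n²} w^n` is
`(Q;Q)_N (Q;Q)_{2N} / ((Q;Q)_{N+n} (Q;Q)_{N-n})`. The partial products `(Q;Q)_k` converge to a
nonzero limit, so these coefficients are uniformly bounded and tend to `1` as `N → ∞`, and
dominated convergence (Tannery's theorem) passes to the limit in the finite identity.
-/

open Finset Filter Topology

section GaussBinom

variable {R : Type*} [CommSemiring R] (Q : R)

def gaussBinom : ℕ → ℕ → R
  | _, 0 => 1
  | 0, _ + 1 => 0
  | n + 1, k + 1 => gaussBinom n k + Q ^ (k + 1) * gaussBinom n (k + 1)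

@[simp] lemma gaussBinom_zero_right (n : ℕ) : gaussBinom Q n 0 = 1 := by
  cases n <;> rfl

lemma gaussBinom_succ_succ (n k : ℕ) :
    gaussBinom Q (n + 1) (k + 1) = gaussBinom Q n k + Q ^ (k + 1) * gaussBinom Q n (k + 1) :=
  rfl

lemma gaussBinom_eq_zero_of_lt {n k : ℕ} (h : n < k) : gaussBinom Q n k = 0 := by
  induction n generalizing k with
  | zero => obtain ⟨k, rfl⟩ := Nat.exists_eq_succ_of_ne_zero h.ne'; rfl
  | succ n ih =>
    obtain ⟨k, rfl⟩ := Nat.exists_eq_succ_of_ne_zero (Nat.ne_zero_of_lt h)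
    rw [gaussBinom_succ_succ, ih (by omega), ih (by omega), mul_zero, add_zero]

/-- Rothe's `q`-binomial theorem. -/
theorem prod_one_add_pow_mul_eq_sum (n : ℕ) (x : R) :
    ∏ i ∈ range n, (1 + Q ^ i * x) =
      ∑ k ∈ range (n + 1), Q ^ k.choose 2 * gaussBinom Q n k * x ^ k := by
  induction n generalizing x with
  | zero => simp
  | succ n ih =>
    set t : ℕ → R := fun k ↦ Q ^ k.choose 2 * gaussBinom Q n k * (Q * x) ^ k with ht
    have hshift : ∑ k ∈ range (n + 1), t (k + 1) + 1 = ∑ k ∈ range (n + 1), t k := by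
      have h0 : t 0 = 1 := by simp [ht]
      have hlast : t (n + 1) = 0 := by simp [ht, gaussBinom_eq_zero_of_lt]
      rw [← h0, ← sum_range_succ', sum_range_succ, hlast, add_zero]
    have hterm : ∀ k, Q ^ (k + 1).choose 2 * gaussBinom Q (n + 1) (k + 1) * x ^ (k + 1) =
        x * t k + t (k + 1) := by
      intro k
      simp only [ht, gaussBinom_succ_succ, Nat.choose_succ_succ', Nat.choose_one_right]
      ring
    calc ∏ i ∈ range (n + 1), (1 + Q ^ i * x)
        = (1 + x) * ∏ i ∈ range n, (1 + Q ^ i * (Q * x)) := by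
          rw [prod_range_succ', mul_comm]
          simp [pow_succ, mul_assoc]
      _ = x * ∑ k ∈ range (n + 1), t k + (∑ k ∈ range (n + 1), t (k + 1) + 1) := by
          rw [ih, hshift]; ring
      _ = _ := by
          rw [sum_range_succ' _ (n + 1), mul_sum, ← add_assoc, ← sum_add_distrib]
          simp [hterm]

end GaussBinom

section QPochhammer

variable {R : Type*} [CommRing R]

def qPochhammer (a Q : R) (n : ℕ) : R := ∏ i ∈ range n, (1 - a * Q ^ i)

lemma qPochhammer_succ (a Q : R) (n : ℕ) :
    qPochhammer a Q (n + 1) = qPochhammer a Q n * (1 - a * Q ^ n) :=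
  prod_range_succ _ _

theorem gaussBinom_mul_qPochhammer_mul_qPochhammer (Q : R) {n k : ℕ} (hk : k ≤ n) :
    gaussBinom Q n k * qPochhammer Q Q k * qPochhammer Q Q (n - k) = qPochhammer Q Q n := by
  induction n generalizing k with
  | zero =>
    obtain rfl : k = 0 := by omega
    simp [qPochhammer]
  | succ n ih =>
    rcases k with _ | k
    · simp [qPochhammer]
    rw [gaussBinom_succ_succ, Nat.succ_sub_succ, qPochhammer_succ, qPochhammer_succ]
    rcases Nat.lt_or_eq_of_le (Nat.le_of_succ_le_succ hk) with hlt | rfl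
    · obtain ⟨d, rfl⟩ := Nat.exists_eq_add_of_lt hlt
      have h₁ := ih (k := k) (by omega)
      have h₂ := ih (k := k + 1) (by omega)
      rw [show k + d + 1 - k = d + 1 by omega, qPochhammer_succ] at h₁ ⊢
      rw [show k + d + 1 - (k + 1) = d by omega, qPochhammer_succ] at h₂
      linear_combination (1 - Q * Q ^ k) * h₁ + Q ^ (k + 1) * (1 - Q * Q ^ d) * h₂
    · have h := ih (k := k) le_rfl
      rw [Nat.sub_self] at h ⊢
      rw [gaussBinom_eq_zero_of_lt Q k.lt_succ_self]
      linear_combination (1 - Q * Q ^ k) * h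

end QPochhammer

section FiniteJacobi

variable {K : Type*} [Field K] {q w : K}

lemma two_mul_choose_two_add_self (k : ℕ) : 2 * k.choose 2 + k = k ^ 2 := by
  induction k with
  | zero => rfl
  | succ k ih => rw [Nat.choose_succ_succ, Nat.choose_one_right]; nlinarith

lemma prod_range_pow_two_mul_add_one {M : Type*} [CommMonoid M] (q : M) (N : ℕ) :
    ∏ j ∈ range N, q ^ (2 * j + 1) = q ^ (N ^ 2) := by
  induction N with
  | zero => simp
  | succ N ih => rw [prod_range_succ, ih, ← pow_add]; ring_nf

/-- Read backwards, the factors `i = N - 1 - j` of the right-hand product are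
`1 + q^{-(2j+1)} w = q^{-(2j+1)} w (1 + q^{2j+1} w⁻¹)`; the factors `i = N + j` are
`1 + q^{2j+1} w`. -/
lemma prod_range_jacobi_eq_zpow_mul_prod_range (hq : q ≠ 0) (hw : w ≠ 0) (N : ℕ) :
    ∏ j ∈ range N, ((1 + q ^ (2 * j + 1) * w) * (1 + q ^ (2 * j + 1) * w⁻¹)) =
      q ^ ((N : ℤ) ^ 2) * w ^ (-(N : ℤ)) *
        ∏ i ∈ range (2 * N), (1 + (q ^ 2) ^ i * (q ^ (1 - 2 * (N : ℤ)) * w)) := by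
  have hpow : ∀ i : ℕ, (q ^ 2) ^ i * q ^ (1 - 2 * (N : ℤ)) = q ^ (2 * (i : ℤ) + 1 - 2 * N) := by
    intro i
    rw [← pow_mul, ← zpow_natCast, ← zpow_add₀ hq]
    push_cast
    ring_nf
  have hfactor : ∀ j ∈ range N,
      (1 + (q ^ 2) ^ (N - 1 - j) * (q ^ (1 - 2 * (N : ℤ)) * w)) *
        (1 + (q ^ 2) ^ (N + j) * (q ^ (1 - 2 * (N : ℤ)) * w)) =
      (q ^ (2 * j + 1))⁻¹ * w * ((1 + q ^ (2 * j + 1) * w) * (1 + q ^ (2 * j + 1) * w⁻¹)) := by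
    intro j hj
    rw [mem_range] at hj
    rw [← mul_assoc, ← mul_assoc, hpow, hpow,
      show 2 * ((N - 1 - j : ℕ) : ℤ) + 1 - 2 * N = -((2 * j + 1 : ℕ) : ℤ) by omega,
      show 2 * ((N + j : ℕ) : ℤ) + 1 - 2 * N = ((2 * j + 1 : ℕ) : ℤ) by omega,
      zpow_neg, zpow_natCast]
    field_simp
    ring
  have hcoef : ∏ j ∈ range N, (q ^ (2 * j + 1))⁻¹ * w = (q ^ (N ^ 2))⁻¹ * w ^ N := by
    rw [prod_mul_distrib, prod_inv_distrib, prod_range_pow_two_mul_add_one, prod_const, card_range]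
  rw [two_mul, prod_range_add,
    ← prod_range_reflect (fun i ↦ 1 + (q ^ 2) ^ i * (q ^ (1 - 2 * (N : ℤ)) * w)) N,
    ← prod_mul_distrib, prod_congr rfl hfactor,
    prod_mul_distrib (f := fun j ↦ (q ^ (2 * j + 1))⁻¹ * w), hcoef, zpow_neg, zpow_natCast,
    show q ^ ((N : ℤ) ^ 2) = q ^ (N ^ 2) by norm_cast, ← mul_assoc, mul_mul_mul_comm,
    mul_inv_cancel₀ (pow_ne_zero _ hq), inv_mul_cancel₀ (pow_ne_zero _ hw), one_mul, one_mul]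

theorem prod_range_jacobi_eq_sum (hq : q ≠ 0) (hw : w ≠ 0) (N : ℕ) :
    ∏ j ∈ range N, ((1 + q ^ (2 * j + 1) * w) * (1 + q ^ (2 * j + 1) * w⁻¹)) =
      ∑ n ∈ Icc (-N : ℤ) N, gaussBinom (q ^ 2) (2 * N) (n + N).toNat * (q ^ (n ^ 2) * w ^ n) := by
  have hterm : ∀ k : ℕ, q ^ ((N : ℤ) ^ 2) * w ^ (-(N : ℤ)) *
      ((q ^ 2) ^ k.choose 2 * (q ^ (1 - 2 * (N : ℤ)) * w) ^ k) =
        q ^ (((k : ℤ) - N) ^ 2) * w ^ ((k : ℤ) - N) := by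
    intro k
    have hexp : ((k : ℤ) - N) ^ 2 = N ^ 2 + ((2 * k.choose 2 : ℕ) : ℤ) + (1 - 2 * N) * k := by
      have := congrArg (Nat.cast : ℕ → ℤ) (two_mul_choose_two_add_self k)
      push_cast at this ⊢
      linear_combination -this
    rw [hexp, zpow_add₀ hq, zpow_add₀ hq, zpow_mul, zpow_natCast, zpow_natCast, pow_mul,
      zpow_sub₀ hw, zpow_neg, zpow_natCast, mul_pow]
    simp only [zpow_natCast]
    ring
  rw [prod_range_jacobi_eq_zpow_mul_prod_range hq hw, prod_one_add_pow_mul_eq_sum, mul_sum]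
  refine sum_nbij' (fun k ↦ (k : ℤ) - N) (fun n ↦ (n + N).toNat) ?_ ?_ ?_ ?_ ?_
  · intro k hk; simp only [mem_range, mem_Icc] at hk ⊢; omega
  · intro n hn; simp only [mem_range, mem_Icc] at hn ⊢; omega
  · intro k _; simp
  · intro n hn; simp only [mem_Icc] at hn; omega
  · intro k _
    rw [show ((k : ℤ) - N + N).toNat = k by omega, ← hterm]
    ring

end FiniteJacobi

lemma summable_pow_sq_mul_pow {r s : ℝ} (hr0 : 0 ≤ r) (hr : r < 1) (hs : 0 ≤ s) :
    Summable fun n : ℕ ↦ r ^ (n ^ 2) * s ^ n := by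
  refine .of_norm_bounded_eventually_nat summable_geometric_two ?_
  have h0 : Tendsto (fun n : ℕ ↦ r ^ n * s) atTop (𝓝 0) := by
    simpa using (tendsto_pow_atTop_nhds_zero_of_lt_one hr0 hr).mul_const s
  filter_upwards [h0.eventually (ge_mem_nhds (by norm_num : (0 : ℝ) < 1 / 2))] with n hn
  rw [Real.norm_of_nonneg (by positivity), sq, pow_mul, ← mul_pow]
  exact pow_le_pow_left₀ (by positivity) hn n

section Analytic

variable {K : Type*} [NormedField K]

lemma summable_norm_zpow_sq_mul_zpow {q : K} (hq : ‖q‖ < 1) (w : K) :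
    Summable fun n : ℤ ↦ ‖q ^ (n ^ 2) * w ^ n‖ := by
  apply Summable.of_nat_of_neg
  · refine (summable_pow_sq_mul_pow (norm_nonneg q) hq (norm_nonneg w)).congr fun n ↦ ?_
    rw [← Nat.cast_pow, zpow_natCast, zpow_natCast]
    simp only [norm_mul, norm_pow]
  · refine (summable_pow_sq_mul_pow (norm_nonneg q) hq (norm_nonneg w⁻¹)).congr fun n ↦ ?_
    rw [neg_sq, ← Nat.cast_pow, zpow_natCast, zpow_neg, zpow_natCast]
    simp only [norm_mul, norm_pow, norm_inv, inv_pow]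

variable {Q : K}

lemma one_sub_mul_pow_self_ne_zero (hQ : ‖Q‖ < 1) (i : ℕ) : 1 - Q * Q ^ i ≠ 0 := by
  rw [sub_ne_zero, ne_comm, ← pow_succ']
  refine fun h ↦ (pow_lt_one₀ (norm_nonneg Q) hQ i.succ_ne_zero).ne ?_
  rw [← norm_pow, h, norm_one]

lemma qPochhammer_self_ne_zero (hQ : ‖Q‖ < 1) (n : ℕ) : qPochhammer Q Q n ≠ 0 :=
  prod_ne_zero_iff.2 fun i _ ↦ one_sub_mul_pow_self_ne_zero hQ i

lemma qPochhammer_mul_gaussBinom_eq (hQ : ‖Q‖ < 1) {N : ℕ} {n : ℤ} (hn : n ∈ Icc (-N : ℤ) N) :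
    qPochhammer Q Q N * gaussBinom Q (2 * N) (n + N).toNat =
      qPochhammer Q Q N * qPochhammer Q Q (2 * N) * (qPochhammer Q Q (n + N).toNat)⁻¹ *
        (qPochhammer Q Q (N - n).toNat)⁻¹ := by
  rw [mem_Icc] at hn
  have h := gaussBinom_mul_qPochhammer_mul_qPochhammer Q (n := 2 * N) (k := (n + N).toNat)
    (by omega)
  rw [show 2 * N - (n + N).toNat = (N - n).toNat by omega] at h
  rw [← h]
  field_simp [qPochhammer_self_ne_zero hQ]

variable [CompleteSpace K]

lemma multipliable_one_add_mul_pow (hQ : ‖Q‖ < 1) (c : K) :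
    Multipliable fun i : ℕ ↦ 1 + c * Q ^ i :=
  multipliable_one_add_of_summable <| by
    simpa [norm_mul, norm_pow] using
      (summable_geometric_of_lt_one (norm_nonneg Q) hQ).mul_left ‖c‖

lemma tendsto_qPochhammer (hQ : ‖Q‖ < 1) (a : K) :
    Tendsto (qPochhammer a Q) atTop (𝓝 (∏' i : ℕ, (1 - a * Q ^ i))) := by
  have : Multipliable fun i : ℕ ↦ 1 - a * Q ^ i := by
    simpa [sub_eq_add_neg] using multipliable_one_add_mul_pow hQ (-a)
  exact this.hasProd.tendsto_prod_nat

lemma tprod_one_sub_mul_pow_self_ne_zero (hQ : ‖Q‖ < 1) : ∏' i : ℕ, (1 - Q * Q ^ i) ≠ 0 := by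
  simpa [sub_eq_add_neg] using tprod_one_add_ne_zero_of_summable (f := fun i : ℕ ↦ -(Q * Q ^ i))
    (by simpa [sub_eq_add_neg] using one_sub_mul_pow_self_ne_zero hQ)
    (by simpa [norm_mul, norm_pow] using
      (summable_geometric_of_lt_one (norm_nonneg Q) hQ).mul_left ‖Q‖)

lemma exists_norm_qPochhammer_self_le (hQ : ‖Q‖ < 1) :
    ∃ C, ∀ n, ‖qPochhammer Q Q n‖ ≤ C ∧ ‖(qPochhammer Q Q n)⁻¹‖ ≤ C := by
  have hlim := tendsto_qPochhammer hQ Q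
  obtain ⟨C₁, hC₁⟩ := isBounded_iff_forall_norm_le.1 (Metric.isBounded_range_of_tendsto _ hlim)
  obtain ⟨C₂, hC₂⟩ := isBounded_iff_forall_norm_le.1 (Metric.isBounded_range_of_tendsto _
    (hlim.inv₀ (tprod_one_sub_mul_pow_self_ne_zero hQ)))
  exact ⟨max C₁ C₂, fun n ↦ ⟨(hC₁ _ ⟨n, rfl⟩).trans (le_max_left _ _),
    (hC₂ _ ⟨n, rfl⟩).trans (le_max_right _ _)⟩⟩

lemma exists_norm_qPochhammer_mul_gaussBinom_le (hQ : ‖Q‖ < 1) :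
    ∃ C, ∀ (N : ℕ) (n : ℤ), n ∈ Icc (-N : ℤ) N →
      ‖qPochhammer Q Q N * gaussBinom Q (2 * N) (n + N).toNat‖ ≤ C := by
  obtain ⟨C, hC⟩ := exists_norm_qPochhammer_self_le hQ
  refine ⟨C * C * C * C, fun N n hn ↦ ?_⟩
  have hC0 : 0 ≤ C := (norm_nonneg _).trans (hC 0).1
  rw [qPochhammer_mul_gaussBinom_eq hQ hn]
  simp only [norm_mul]
  gcongr
  all_goals first | exact (hC _).1 | exact (hC _).2

lemma tendsto_qPochhammer_mul_gaussBinom (hQ : ‖Q‖ < 1) (n : ℤ) :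
    Tendsto (fun N : ℕ ↦ qPochhammer Q Q N * gaussBinom Q (2 * N) (n + N).toNat) atTop (𝓝 1) := by
  have hlim := tendsto_qPochhammer hQ Q
  set P := ∏' i : ℕ, (1 - Q * Q ^ i)
  have hP : P ≠ 0 := tprod_one_sub_mul_pow_self_ne_zero hQ
  have hidx : ∀ m : ℤ, Tendsto (fun N : ℕ ↦ (m + N).toNat) atTop atTop := fun m ↦
    tendsto_atTop_atTop.2 fun b ↦ ⟨b + m.natAbs, fun N hN ↦ by omega⟩
  have hprod := (((hlim.mul (hlim.comp (tendsto_id.const_mul_atTop' two_pos))).mul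
    ((hlim.comp (hidx n)).inv₀ hP)).mul ((hlim.comp (hidx (-n))).inv₀ hP))
  rw [mul_inv_cancel_right₀ hP, mul_inv_cancel₀ hP] at hprod
  refine hprod.congr' ?_
  filter_upwards [eventually_ge_atTop n.natAbs] with N hN
  rw [qPochhammer_mul_gaussBinom_eq hQ (by rw [mem_Icc]; omega), sub_eq_neg_add]
  rfl

theorem hasProd_jacobi {q w : K} (hq0 : q ≠ 0) (hq : ‖q‖ < 1) (hw : w ≠ 0) :
    HasProd (fun m : ℕ ↦
        (1 - q ^ (2 * m + 2)) * (1 + q ^ (2 * m + 1) * w) * (1 + q ^ (2 * m + 1) * w⁻¹))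
      (∑' n : ℤ, q ^ (n ^ 2) * w ^ n) := by
  have hQ : ‖q ^ 2‖ < 1 := by rw [norm_pow]; exact pow_lt_one₀ (norm_nonneg q) hq two_ne_zero
  have hmult : Multipliable fun m : ℕ ↦
      (1 - q ^ (2 * m + 2)) * (1 + q ^ (2 * m + 1) * w) * (1 + q ^ (2 * m + 1) * w⁻¹) :=
    (((multipliable_one_add_mul_pow hQ (-q ^ 2)).mul (multipliable_one_add_mul_pow hQ (q * w))).mul
      (multipliable_one_add_mul_pow hQ (q * w⁻¹))).congr fun m ↦ by ring
  set a : ℕ → ℤ → K := fun N n ↦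
    qPochhammer (q ^ 2) (q ^ 2) N * gaussBinom (q ^ 2) (2 * N) (n + N).toNat
  have hpartial : ∀ N : ℕ,
      ∏ m ∈ range N, (1 - q ^ (2 * m + 2)) * (1 + q ^ (2 * m + 1) * w) * (1 + q ^ (2 * m + 1) * w⁻¹)
        = ∑' n : ℤ, (Icc (-N : ℤ) N : Set ℤ).indicator (fun n ↦ a N n * (q ^ (n ^ 2) * w ^ n)) n := by
    intro N
    simp only [a, ← sum_eq_tsum_indicator, mul_assoc, ← mul_sum]
    rw [← prod_range_jacobi_eq_sum hq0 hw, qPochhammer, ← prod_mul_distrib]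
    exact prod_congr rfl fun m _ ↦ by ring
  obtain ⟨C, hC⟩ := exists_norm_qPochhammer_mul_gaussBinom_le hQ
  have hC0 : 0 ≤ C := (norm_nonneg _).trans (hC 0 0 (by simp))
  have hlim : Tendsto (fun N : ℕ ↦ ∑' n : ℤ,
      (Icc (-N : ℤ) N : Set ℤ).indicator (fun n ↦ a N n * (q ^ (n ^ 2) * w ^ n)) n)
      atTop (𝓝 (∑' n : ℤ, q ^ (n ^ 2) * w ^ n)) := by
    refine tendsto_tsum_of_dominated_convergence (bound := fun n ↦ C * ‖q ^ (n ^ 2) * w ^ n‖)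
      ((summable_norm_zpow_sq_mul_zpow hq w).mul_left C) (fun n ↦ ?_) (.of_forall fun N n ↦ ?_)
    · have h := (tendsto_qPochhammer_mul_gaussBinom hQ n).mul_const (q ^ (n ^ 2) * w ^ n)
      rw [one_mul] at h
      refine h.congr' ?_
      filter_upwards [eventually_ge_atTop n.natAbs] with N hN
      rw [Set.indicator_of_mem (by simp only [coe_Icc, Set.mem_Icc]; omega)]
    · by_cases hn : n ∈ Icc (-N : ℤ) N
      · rw [Set.indicator_of_mem (mem_coe.2 hn), norm_mul]
        exact mul_le_mul_of_nonneg_right (hC N n hn) (norm_nonneg _)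
      · rw [Set.indicator_of_notMem (by simpa using hn), norm_zero]
        positivity
  exact (tendsto_nhds_unique hmult.hasProd.tendsto_prod_nat
    (hlim.congr fun N ↦ (hpartial N).symm)) ▸ hmult.hasProd

end Analytic

/-- The Jacobi triple product identity: for `0 < ‖q‖ < 1` and `z ≠ 0`,
`∏_{m=1}^∞ (1 - q^{2m})(1 + q^{2m-1} z²)(1 + q^{2m-1} z^{-2}) = ∑_{n ∈ ℤ} q^{n²} z^{2n}`. -/
theorem jacobi_triple_product (q z : ℂ) (hq0 : 0 < ‖q‖) (hq : ‖q‖ < 1) (hz : z ≠ 0) :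
    ∏' m : ℕ, ((1 - q ^ (2 * (m + 1))) * (1 + q ^ (2 * (m + 1) - 1) * z ^ (2 : ℤ)) *
        (1 + q ^ (2 * (m + 1) - 1) * z ^ (-2 : ℤ))) =
      ∑' n : ℤ, q ^ (n ^ 2).toNat * z ^ (2 * n) := by
  calc _ = ∏' m : ℕ, ((1 - q ^ (2 * m + 2)) * (1 + q ^ (2 * m + 1) * z ^ (2 : ℤ)) *
          (1 + q ^ (2 * m + 1) * (z ^ (2 : ℤ))⁻¹)) :=
        tprod_congr fun m ↦ by rw [show 2 * (m + 1) - 1 = 2 * m + 1 by omega, zpow_neg]; ring_nf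
    _ = ∑' n : ℤ, q ^ (n ^ 2) * (z ^ (2 : ℤ)) ^ n :=
        (hasProd_jacobi (norm_pos_iff.1 hq0) hq (zpow_ne_zero 2 hz)).tprod_eq
    _ = _ := tsum_congr fun n ↦ by
        rw [← zpow_mul, ← zpow_natCast q, Int.toNat_of_nonneg (sq_nonneg n)]
end
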